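/- Let p ≥ 5 be a prime and let q ≥ 2 be an integer. Then d(pq + 1, p, (p−1)/2) = q/4. -/

import Mathlib

/-- Ozsváth–Szabó's recursive formula for the correction terms (d-invariants)
`d(L(p,q), i)` of lens spaces: `d(p, 0, i) = 0` and, for `q ≥ 1`,
`d(p, q, i) = -1/4 + (2i + 1 - p - q)^2 / (4pq) - d(q, p mod q, i mod q)`. -/
def lensD (p q i : ℕ) : ℚ :=
  if h : q = 0 then 0
  else -1/4 + ((2 * i + 1 - p - q : ℚ)) ^ 2 / (4 * p * q)
       - lensD q (p % q) (i % q)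
termination_by q
decreasing_by exact Nat.mod_lt _ (Nat.pos_of_ne_zero h)

/-
As `(pq + 1) mod p = 1`, the recursion reaches `d(1, 0, 0) = 0` after two steps. At the middle
index `2i + 1 = p` the two squared terms are `(pq + 1)²` and `1`, so the value is
`((pq + 1) - 1) / (4p) = q/4`.
-/

lemma lensD_zero (p i : ℕ) : lensD p 0 i = 0 := by
  rw [lensD, dif_pos rfl]

lemma lensD_of_ne_zero {p q : ℕ} (i : ℕ) (hq : q ≠ 0) :
    lensD p q i = -1/4 + ((2 * i + 1 - p - q : ℚ)) ^ 2 / (4 * p * q)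
      - lensD q (p % q) (i % q) := by
  rw [lensD, dif_neg hq]

lemma lensD_one (p i : ℕ) : lensD p 1 i = -1/4 + ((2 * i - p : ℚ)) ^ 2 / (4 * p) := by
  rw [lensD_of_ne_zero i one_ne_zero, Nat.mod_one, Nat.mod_one, lensD_zero]
  push_cast
  ring

lemma lensD_mul_add_one {p i : ℕ} (q : ℕ) (hp : 1 < p) (hi : i < p) :
    lensD (p * q + 1) p i
      = -1/4 + ((2 * i - p * q - p : ℚ)) ^ 2 / (4 * (p * q + 1) * p)
        - (-1/4 + ((2 * i - p : ℚ)) ^ 2 / (4 * p)) := by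
  have hmod : (p * q + 1) % p = 1 := by rw [Nat.mul_add_mod, Nat.mod_eq_of_lt hp]
  rw [lensD_of_ne_zero i (by omega), hmod, Nat.mod_eq_of_lt hi, lensD_one]
  push_cast
  ring

lemma lensD_mul_add_one_half_pred {p : ℕ} (q : ℕ) (hodd : Odd p) (hp : 1 < p) :
    lensD (p * q + 1) p ((p - 1) / 2) = (q : ℚ) / 4 := by
  have hmid : 2 * ((p - 1) / 2) + 1 = p := by
    obtain ⟨k, rfl⟩ := hodd
    omega
  have hmidℚ : 2 * (((p - 1) / 2 : ℕ) : ℚ) = p - 1 := by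
    rw [eq_sub_iff_add_eq]
    exact_mod_cast hmid
  rw [lensD_mul_add_one q hp (by omega), hmidℚ]
  have hp0 : (p : ℚ) ≠ 0 := by positivity
  have hpq0 : (p : ℚ) * q + 1 ≠ 0 := by positivity
  field_simp
  ring

theorem lensD_pq_add_one_general (p q : ℕ) (hp : p.Prime) (hp5 : 5 ≤ p) :
    lensD (p * q + 1) p ((p - 1) / 2) = (q : ℚ) / 4 :=
  lensD_mul_add_one_half_pred q (hp.odd_of_ne_two (by omega)) (by omega)

/-- For `p ≥ 5` prime and `q ≥ 2`, `d(pq + 1, p, (p-1)/2) = q/4`. -/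
theorem lensD_pq_add_one (p q : ℕ) (hp : p.Prime) (hp5 : 5 ≤ p) (hq : 2 ≤ q) :
    lensD (p * q + 1) p ((p - 1) / 2) = (q : ℚ) / 4 :=
  lensD_pq_add_one_general p q hp hp5
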